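/- Let p be an odd prime, let a, b ∈ ℂ_p with R = |a − b|_p > 0, and let Φ be an interlocked family of path sequences. Suppose f_i (i = 1, 2, …) are holomorphic on 𝒜(a,b), each line integral ∫_{𝒜(a,b),Φ} f_i(x) dx exists, and f_i → f uniformly on 𝒜(a,b). Then f is holomorphic on 𝒜(a,b), the integral ∫_{𝒜(a,b),Φ} f(x) dx exists, and ∫_{𝒜(a,b),Φ} f(x) dx = lim_{i→∞} ∫_{𝒜(a,b),Φ} f_i(x) dx. -/

import Mathlib

/-!
Throughout, `K` plays the role of `ℂ_p`, the completion of an algebraic closure of `ℚ_p`: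
it is a complete, algebraically closed, nonarchimedean (ultrametric) normed field equipped
with an isometric `ℚ_[p]`-algebra structure (hypothesis `hKext`).
-/

open scoped BigOperators

/-- A *path sequence*: a function defined (positive-valued and strictly increasing)
for `k ≥ k₀`, for some positive integer `k₀`. -/
structure PathSeq where
  toFun : ℕ → ℕ
  k₀ : ℕ
  k₀_pos : 0 < k₀
  pos : ∀ k, k₀ ≤ k → 0 < toFun k
  mono : ∀ k l, k₀ ≤ k → k < l → toFun k < toFun l

/-- The Riemann-type sum `A_{f,φ}(k)` (with `N = φ(k)`):
`p^{-N} ∑_ζ (b - a) ζ · f (a + (b - a) ζ)`, `ζ` ranging over the `p^N`-th roots of unity. -/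
noncomputable def Asum (p : ℕ) (K : Type*) [NormedField K] (a b : K) (f : K → K) (N : ℕ) : K :=
  ((p : K) ^ N)⁻¹ *
    ∑ ζ ∈ Polynomial.nthRootsFinset (p ^ N) (1 : K), (b - a) * ζ * f (a + (b - a) * ζ)

/-- `ψ` is, for `k ≥ k₀`, a subsequence of the path sequence `φ`. -/
def SubseqFrom (ψ φ : PathSeq) (k₀ : ℕ) : Prop :=
  ∃ σ : ℕ → ℕ, (∀ k l, k₀ ≤ k → k < l → σ k < σ l) ∧
    ∀ k, k₀ ≤ k → φ.k₀ ≤ σ k ∧ ψ.toFun k = φ.toFun (σ k)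

/-- An *interlocked* family of path sequences: nonempty, and any two members have a common
member-subsequence. -/
def Interlocked (Φ : Set PathSeq) : Prop :=
  Φ.Nonempty ∧ ∀ φ₁ ∈ Φ, ∀ φ₂ ∈ Φ, ∃ φ₃ ∈ Φ, ∃ k₀ : ℕ, 0 < k₀ ∧
    SubseqFrom φ₃ φ₁ k₀ ∧ SubseqFrom φ₃ φ₂ k₀

/-- `∫_{𝒜(a,b),Φ} f(x) dx = L`: for every `ε > 0` there are `φ ∈ Φ` and `M` such that
`|A_{f,φ}(k) - L| < ε` for all `k > M` (in the domain of `φ`). -/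
def HasIntegral (p : ℕ) (K : Type*) [NormedField K] (a b : K) (f : K → K)
    (Φ : Set PathSeq) (L : K) : Prop :=
  ∀ ε : ℝ, 0 < ε → ∃ φ ∈ Φ, ∃ M : ℕ, φ.k₀ ≤ M ∧
    ∀ k, M < k → ‖Asum p K a b f (φ.toFun k) - L‖ < ε

/-- `f` is holomorphic on `S`: its values on `S` are given by the single power series with
coefficients `c`, centered at `b`, convergent on `S`. -/
def HolomorphicOn' (K : Type*) [NormedField K] (c : ℕ → K) (b : K) (f : K → K)
    (S : Set K) : Prop :=
  ∀ x ∈ S, Summable (fun n : ℕ => c n * (x - b) ^ n) ∧ f x = ∑' n : ℕ, c n * (x - b) ^ n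

/-- The arc `𝒜(a,b)`: the open disc of radius `R = |a - b|` around `b`. -/
def arc (K : Type*) [NormedField K] (a b : K) : Set K := {x : K | ‖x - b‖ < ‖a - b‖}

/-- `c` are controlled coefficients of order `β` (for the radius `R`). -/
def Controlled (K : Type*) [NormedField K] (c : ℕ → K) (R β : ℝ) : Prop :=
  ∃ M n₀ : ℝ, 0 < n₀ ∧ ∀ n : ℕ, n₀ < (n : ℝ) → ‖c n‖ * R ^ n < M * (n : ℝ) ^ β

/-- The interlocked family `Φ_α = {k ↦ α + λ k : λ ∈ ℤ⁺}`. -/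
def PhiAlpha (α : ℕ) : Set PathSeq :=
  {φ : PathSeq | ∃ lam : ℕ, 0 < lam ∧ ∀ k : ℕ, φ.toFun k = α + lam * k}

/-!
Averaging over the `m`-th roots of unity with `‖m‖ = 1` gives the Cauchy estimate
`‖c n‖ R ^ n ≤ sup_{𝒜(a,b)} ‖h‖` for a power series `h = ∑ c n (x - b) ^ n` on the arc (the
radius `R` itself is reached because the value group of an algebraically closed field is
dense). So if `f i → g` uniformly on the arc, the coefficients `c i n` converge uniformly for
the weight `R ^ n`, and since a series converges in an ultrametric field as soon as its terms
tend to zero, the limit coefficients define a power series equal to `g`.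

In the other direction, `p ^ N • A_{h,φ}(k)` (with `N = φ(k)`) is
`(b - a) ∑ c n (a - b) ^ n ∑_ζ ζ (1 - ζ) ^ n`, and the inner sum over the `p ^ N`-th roots of
unity is `p ^ N` times an integer; so `‖A_{h,φ}(k)‖ ≤ R sup ‖c n‖ R ^ n` uniformly in `k`.
Hence the Riemann sums of `f i` converge to those of `g` uniformly in `k`. Two integrals along
`Φ` can be compared on a common subsequence, so `(∫ f i)` is Cauchy and its limit is `∫ g`.
-/

open Polynomial Finset Filter Topology

theorem IsPrimitiveRoot.sum_nthRootsFinset_one {R M : Type*} [CommRing R] [IsDomain R]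
    [AddCommMonoid M] {ζ : R} {m : ℕ} (hζ : IsPrimitiveRoot ζ m) (F : R → M) :
    ∑ x ∈ nthRootsFinset m (1 : R), F x = ∑ i ∈ range m, F (ζ ^ i) := by
  classical
  rw [nthRootsFinset_def, ← Multiset.toFinset_eq hζ.nthRoots_one_nodup, Finset.sum_mk,
    hζ.nthRoots_eq (one_pow m)]
  simp [Finset.sum_eq_multiset_sum]

theorem sum_nthRootsFinset_pow {K : Type*} [Field K] [IsAlgClosed K] {m : ℕ} (hm : (m : K) ≠ 0)
    (j : ℕ) : ∑ x ∈ nthRootsFinset m (1 : K), x ^ j = if m ∣ j then (m : K) else 0 := by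
  have : NeZero (m : K) := ⟨hm⟩
  obtain ⟨ζ, hζ⟩ := HasEnoughRootsOfUnity.exists_primitiveRoot K m
  simp_rw [hζ.sum_nthRootsFinset_one, ← pow_mul, mul_comm _ j, pow_mul]
  split_ifs with hdvd
  · simp [(hζ.pow_eq_one_iff_dvd j).mpr hdvd]
  · have hne : ζ ^ j ≠ 1 := mt (hζ.pow_eq_one_iff_dvd j).mp hdvd
    rw [geom_sum_eq hne, ← pow_mul, mul_comm, pow_mul, hζ.pow_eq_one, one_pow, sub_self,
      zero_div]

section Ultrametric

variable {K : Type*} [NormedField K] [IsUltrametricDist K]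

theorem norm_sum_nthRootsFinset_aeval_le [IsAlgClosed K] {m : ℕ} (hm : (m : K) ≠ 0)
    (P : ℤ[X]) : ‖∑ x ∈ nthRootsFinset m (1 : K), aeval x P‖ ≤ ‖(m : K)‖ := by
  simp_rw [aeval_eq_sum_range, Finset.sum_comm (s := nthRootsFinset m (1 : K)), ← Finset.smul_sum,
    sum_nthRootsFinset_pow hm]
  refine IsUltrametricDist.norm_sum_le_of_forall_le_of_nonneg (norm_nonneg _) fun j _ => ?_
  split_ifs
  · rw [zsmul_eq_mul, norm_mul]
    exact mul_le_of_le_one_left (norm_nonneg _) (IsUltrametricDist.norm_intCast_le_one K _)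
  · simp

theorem norm_sub_one_lt_one_of_pow_eq_one {p N : ℕ} (hp : p.Prime) (hpK : ‖(p : K)‖ < 1)
    {ζ : K} (hζ : ζ ^ p ^ N = 1) : ‖ζ - 1‖ < 1 := by
  obtain ⟨m, hm⟩ : ∃ m, p ^ N = m + 1 := Nat.exists_eq_add_one.mpr (pow_pos hp.pos N)
  by_contra! hu
  have hchoose : ∀ k < m, ‖((m + 1).choose (k + 1) : K)‖ ≤ ‖(p : K)‖ := by
    intro k hk
    obtain ⟨c, hc⟩ := hp.dvd_choose_pow (n := N) k.succ_ne_zero (by omega)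
    rw [hm] at hc
    rw [hc, Nat.cast_mul, norm_mul]
    exact mul_le_of_le_one_right (norm_nonneg _) (IsUltrametricDist.norm_natCast_le_one K c)
  have hbinom : (ζ - 1) ^ (m + 1) =
      -∑ k ∈ range m, (ζ - 1) ^ (k + 1) * ((m + 1).choose (k + 1) : K) := by
    have h := add_pow (ζ - 1) 1 (m + 1)
    rw [sub_add_cancel, ← hm, hζ, hm, sum_range_succ, sum_range_succ'] at h
    simp only [one_pow, mul_one, Nat.choose_self, Nat.choose_zero_right, pow_zero,
      Nat.cast_one] at h
    linear_combination -h
  have hle : ‖ζ - 1‖ ^ m * ‖ζ - 1‖ ≤ ‖ζ - 1‖ ^ m * ‖(p : K)‖ := by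
    rw [← pow_succ, ← norm_pow, hbinom, norm_neg]
    refine IsUltrametricDist.norm_sum_le_of_forall_le_of_nonneg (by positivity) fun k hk => ?_
    rw [norm_mul, norm_pow]
    exact mul_le_mul (pow_le_pow_right₀ hu (mem_range.mp hk)) (hchoose k (mem_range.mp hk))
      (norm_nonneg _) (by positivity)
  have := le_of_mul_le_mul_left hle (pow_pos (one_pos.trans_le hu) m)
  linarith

theorem exists_lt_norm_natCast_eq_one (M : ℕ) : ∃ m : ℕ, M < m ∧ ‖(m : K)‖ = 1 := by
  by_cases h : ∃ q : ℕ, 0 < q ∧ ‖(q : K)‖ < 1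
  · obtain ⟨q, hq0, hq⟩ := h
    refine ⟨q * (M + 1) + 1, by nlinarith, ?_⟩
    have hlt : ‖((q * (M + 1) : ℕ) : K)‖ < ‖(1 : K)‖ := by
      rw [Nat.cast_mul, norm_mul, norm_one]
      exact (mul_le_of_le_one_right (norm_nonneg _)
        (IsUltrametricDist.norm_natCast_le_one K _)).trans_lt hq
    rw [Nat.cast_succ, IsUltrametricDist.norm_add_eq_max_of_norm_ne_norm hlt.ne,
      max_eq_right hlt.le, norm_one]
  · simp only [not_exists, not_and, not_lt] at h
    exact ⟨M + 1, M.lt_succ_self,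
      le_antisymm (IsUltrametricDist.norm_natCast_le_one K _) (h _ M.succ_pos)⟩

end Ultrametric

theorem exists_norm_mem_Ico {K : Type*} [NormedField K] [IsAlgClosed K] {x : K} (hx : 1 < ‖x‖)
    {r s : ℝ} (hr : 0 < r) (hrs : r < s) : ∃ t : K, r ≤ ‖t‖ ∧ ‖t‖ < s := by
  obtain ⟨m, hm⟩ := pow_unbounded_of_one_lt ‖x‖ ((one_lt_div hr).mpr hrs)
  have hm0 : m ≠ 0 := by rintro rfl; rw [pow_zero] at hm; linarith
  obtain ⟨n, hn⟩ := exists_mem_Ioc_zpow (pow_pos hr m) hx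
  obtain ⟨t, ht⟩ := IsAlgClosed.exists_pow_nat_eq (x ^ (n + 1)) (Nat.pos_of_ne_zero hm0)
  have htm : ‖t‖ ^ m = ‖x‖ ^ (n + 1) := by rw [← norm_pow, ht, norm_zpow]
  refine ⟨t, (pow_le_pow_iff_left₀ hr.le (norm_nonneg t) hm0).mp (htm ▸ hn.2),
    (pow_lt_pow_iff_left₀ (norm_nonneg t) (hr.trans hrs).le hm0).mp ?_⟩
  calc ‖t‖ ^ m = ‖x‖ ^ n * ‖x‖ := by rw [htm, zpow_add_one₀ (by positivity)]
    _ < r ^ m * (s / r) ^ m := mul_lt_mul'' hn.1 hm (by positivity) (by positivity)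
    _ = s ^ m := by rw [← mul_pow, mul_div_cancel₀ _ hr.ne']

theorem Nat.add_le_of_dvd_sub_add {m n k : ℕ} (hnm : n < m) (hkn : k ≠ n) (h : m ∣ m - n + k) :
    m + n ≤ k := by
  have hnk : n ≤ k := by have := Nat.le_of_dvd (by omega) h; omega
  have h' : m ∣ k - n := by
    have := Nat.dvd_sub h (dvd_refl m)
    rwa [show m - n + k - m = k - n by omega] at this
  have := Nat.le_of_dvd (by omega) h'
  omega

section Coefficients

variable {K : Type*} [NormedField K] [IsUltrametricDist K] [IsAlgClosed K]

theorem norm_coeff_mul_pow_le_of_norm_tsum_le {d : ℕ → K} {t : K} {δ : ℝ}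
    (hs : ∀ ζ : K, ‖ζ‖ = 1 → Summable fun k => d k * (t * ζ) ^ k)
    (hb : ∀ ζ : K, ‖ζ‖ = 1 → ‖∑' k, d k * (t * ζ) ^ k‖ ≤ δ) (n : ℕ) :
    ‖d n * t ^ n‖ ≤ δ := by
  refine le_of_forall_pos_le_add fun η hη => ?_
  have hδ : 0 ≤ δ := (norm_nonneg _).trans (hb 1 norm_one)
  obtain ⟨M, hM⟩ : ∃ M, ∀ k ≥ M, ‖d k * t ^ k‖ < η := by
    simpa using Metric.tendsto_atTop.mp (hs 1 norm_one).tendsto_atTop_zero η hη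
  obtain ⟨m, hMm, hm⟩ := exists_lt_norm_natCast_eq_one (K := K) (M + n)
  have hm0 : (m : K) ≠ 0 := norm_ne_zero_iff.mp (by rw [hm]; exact one_ne_zero)
  have hroot : ∀ ζ ∈ nthRootsFinset m (1 : K), ‖ζ‖ = 1 := fun ζ hζ =>
    (isOfFinOrder_iff_pow_eq_one.mpr ⟨m, by omega,
      (mem_nthRootsFinset (by omega) 1).mp hζ⟩).norm_eq_one
  -- `w` is `m` times the average of `ζ ^ (m - n) * ∑' k, d k * (t * ζ) ^ k` over the `m`-th
  -- roots of unity: only the terms with `k ≡ n (mod m)` survive, and all but `k = n` lie past `M`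
  set w : ℕ → K := fun k => if m ∣ m - n + k then m * (d k * t ^ k) else 0
  have hw : ∀ k, ∑ ζ ∈ nthRootsFinset m (1 : K), ζ ^ (m - n) * (d k * (t * ζ) ^ k) = w k := by
    intro k
    have hterm : ∀ ζ : K, ζ ^ (m - n) * (d k * (t * ζ) ^ k) = d k * t ^ k * ζ ^ (m - n + k) :=
      fun ζ => by ring
    simp_rw [hterm, ← Finset.mul_sum, sum_nthRootsFinset_pow hm0, w]
    split_ifs <;> ring
  have hsw : Summable w :=
    (summable_sum fun ζ hζ => (hs ζ (hroot ζ hζ)).mul_left (ζ ^ (m - n))).congr hw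
  have htotal : ‖∑' k, w k‖ ≤ δ := by
    rw [← tsum_congr hw, Summable.tsum_finsetSum fun ζ hζ => (hs ζ (hroot ζ hζ)).mul_left _]
    refine IsUltrametricDist.norm_sum_le_of_forall_le_of_nonneg hδ fun ζ hζ => ?_
    rw [tsum_mul_left, norm_mul, norm_pow, hroot ζ hζ, one_pow, one_mul]
    exact hb ζ (hroot ζ hζ)
  have htail : ‖∑' k, if k = n then 0 else w k‖ ≤ η := by
    refine IsUltrametricDist.norm_tsum_le_of_forall_le_of_nonneg hη.le fun k => ?_
    by_cases hkn : k = n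
    · simpa [hkn] using hη.le
    by_cases hdvd : m ∣ m - n + k
    · have := Nat.add_le_of_dvd_sub_add (by omega) hkn hdvd
      simp only [if_neg hkn, w, if_pos hdvd]
      rw [norm_mul, hm, one_mul]
      exact (hM k (by omega)).le
    · simpa [hkn, hdvd, w] using hη.le
  calc ‖d n * t ^ n‖ = ‖w n‖ := by simp [w, hm, show m - n + n = m by omega]
    _ = ‖(∑' k, w k) - ∑' k, if k = n then 0 else w k‖ := by
      rw [hsw.tsum_eq_add_tsum_ite n, add_sub_cancel_right]
    _ ≤ δ + η := (norm_sub_le _ _).trans (add_le_add htotal htail)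

theorem HolomorphicOn'.norm_coeff_mul_pow_le {d : ℕ → K} {a b : K} {h : K → K} {δ : ℝ}
    (hK : ∃ x : K, 1 < ‖x‖) (hR : 0 < ‖a - b‖) (hol : HolomorphicOn' K d b h (arc K a b))
    (hb : ∀ x ∈ arc K a b, ‖h x‖ ≤ δ) (n : ℕ) : ‖d n * (a - b) ^ n‖ ≤ δ := by
  obtain ⟨x, hx⟩ := hK
  rw [norm_mul, norm_pow]
  have hcont : Tendsto (fun r : ℝ => ‖d n‖ * r ^ n) (𝓝[<] ‖a - b‖) (𝓝 (‖d n‖ * ‖a - b‖ ^ n)) :=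
    ((continuous_const.mul (continuous_pow n)).tendsto _).mono_left nhdsWithin_le_nhds
  refine le_of_tendsto hcont (eventually_of_mem (Ioo_mem_nhdsLT hR) fun r hr => ?_)
  obtain ⟨t, hrt, htR⟩ := exists_norm_mem_Ico hx hr.1 hr.2
  have hmem : ∀ ζ : K, ‖ζ‖ = 1 → b + t * ζ ∈ arc K a b := fun ζ hζ => by
    simpa [arc, hζ] using htR
  calc ‖d n‖ * r ^ n ≤ ‖d n‖ * ‖t‖ ^ n := by gcongr; exact hr.1.le
    _ = ‖d n * t ^ n‖ := by rw [norm_mul, norm_pow]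
    _ ≤ δ := norm_coeff_mul_pow_le_of_norm_tsum_le
      (fun ζ hζ => by simpa using (hol _ (hmem ζ hζ)).1)
      (fun ζ hζ => by simpa [(hol _ (hmem ζ hζ)).2] using hb _ (hmem ζ hζ)) n

end Coefficients

theorem HolomorphicOn'.sub {K : Type*} [NormedField K] {c₁ c₂ : ℕ → K} {b : K} {f g : K → K}
    {S : Set K} (hf : HolomorphicOn' K c₁ b f S) (hg : HolomorphicOn' K c₂ b g S) :
    HolomorphicOn' K (c₁ - c₂) b (f - g) S := by
  intro x hx
  obtain ⟨hs₁, he₁⟩ := hf x hx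
  obtain ⟨hs₂, he₂⟩ := hg x hx
  simp only [Pi.sub_apply, sub_mul]
  exact ⟨hs₁.sub hs₂, by rw [he₁, he₂, hs₁.tsum_sub hs₂]⟩

theorem Asum_sub (p : ℕ) {K : Type*} [NormedField K] (a b : K) (f g : K → K) (N : ℕ) :
    Asum p K a b f N - Asum p K a b g N = Asum p K a b (f - g) N := by
  rw [Asum, Asum, Asum, ← mul_sub, ← Finset.sum_sub_distrib]
  simp only [Pi.sub_apply, mul_sub]

theorem add_sub_mul_mem_arc {K : Type*} [NormedField K] {a b ζ : K} (hR : 0 < ‖a - b‖)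
    (hζ : ‖ζ - 1‖ < 1) : a + (b - a) * ζ ∈ arc K a b := by
  show ‖a + (b - a) * ζ - b‖ < ‖a - b‖
  rw [show a + (b - a) * ζ - b = (a - b) * -(ζ - 1) by ring, norm_mul, norm_neg]
  exact mul_lt_of_lt_one_right hR hζ

theorem HolomorphicOn'.norm_Asum_le {K : Type*} [NormedField K] [IsUltrametricDist K]
    [IsAlgClosed K] [CharZero K] {p : ℕ} (hp : p.Prime) (hpK : ‖(p : K)‖ < 1) {a b : K}
    (hR : 0 < ‖a - b‖) {d : ℕ → K} {h : K → K} (hol : HolomorphicOn' K d b h (arc K a b))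
    {δ : ℝ} (hd : ∀ n, ‖d n * (a - b) ^ n‖ ≤ δ) (N : ℕ) :
    ‖Asum p K a b h N‖ ≤ ‖a - b‖ * δ := by
  have hM : ((p ^ N : ℕ) : K) ≠ 0 := Nat.cast_ne_zero.mpr (pow_ne_zero N hp.ne_zero)
  have hmem : ∀ ζ ∈ nthRootsFinset (p ^ N) (1 : K), a + (b - a) * ζ ∈ arc K a b := fun ζ hζ =>
    add_sub_mul_mem_arc hR (norm_sub_one_lt_one_of_pow_eq_one hp hpK
      ((mem_nthRootsFinset (pow_pos hp.pos N) 1).mp hζ))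
  have hterm : ∀ ζ : K, ∀ n, (b - a) * ζ * (d n * (a + (b - a) * ζ - b) ^ n) =
      (b - a) * (d n * (a - b) ^ n) * (ζ * (1 - ζ) ^ n) := fun ζ n => by
    rw [show a + (b - a) * ζ - b = (a - b) * (1 - ζ) by ring, mul_pow]
    ring
  have hval : ∀ ζ ∈ nthRootsFinset (p ^ N) (1 : K), (b - a) * ζ * h (a + (b - a) * ζ) =
      ∑' n, (b - a) * (d n * (a - b) ^ n) * (ζ * (1 - ζ) ^ n) := fun ζ hζ => by
    simp_rw [(hol _ (hmem ζ hζ)).2, ← tsum_mul_left, hterm]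
  have hsumm : ∀ ζ ∈ nthRootsFinset (p ^ N) (1 : K),
      Summable fun n => (b - a) * (d n * (a - b) ^ n) * (ζ * (1 - ζ) ^ n) := fun ζ hζ => by
    simpa only [hterm] using (hol _ (hmem ζ hζ)).1.mul_left ((b - a) * ζ)
  have hδ : 0 ≤ δ := (norm_nonneg _).trans (hd 0)
  rw [Asum, ← Nat.cast_pow, norm_mul, norm_inv, Finset.sum_congr rfl hval,
    ← Summable.tsum_finsetSum hsumm, inv_mul_le_iff₀ (norm_pos_iff.mpr hM)]
  refine IsUltrametricDist.norm_tsum_le_of_forall_le_of_nonneg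
    (mul_nonneg (norm_nonneg _) (mul_nonneg (norm_nonneg _) hδ)) fun n => ?_
  rw [← Finset.mul_sum, norm_mul, norm_mul, norm_sub_rev b a, mul_comm]
  have hsum : ‖∑ ζ ∈ nthRootsFinset (p ^ N) (1 : K), ζ * (1 - ζ) ^ n‖ ≤ ‖((p ^ N : ℕ) : K)‖ := by
    have := norm_sum_nthRootsFinset_aeval_le hM (X * (1 - X) ^ n)
    simpa using this
  exact mul_le_mul hsum (mul_le_mul_of_nonneg_left (hd n) (norm_nonneg _)) (by positivity)
    (norm_nonneg _)

theorem summable_and_tendsto_tsum_of_tendstoUniformly {E : Type*} [NormedAddCommGroup E]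
    [IsUltrametricDist E] [CompleteSpace E] {u : ℕ → ℕ → E} {v : ℕ → E}
    (hu : ∀ i, Summable (u i)) (huv : TendstoUniformly u v atTop) :
    Summable v ∧ Tendsto (fun i => ∑' n, u i n) atTop (𝓝 (∑' n, v n)) := by
  rw [Metric.tendstoUniformly_iff] at huv
  have hv : Summable v := by
    refine NonarchimedeanAddGroup.summable_of_tendsto_cofinite_zero ?_
    rw [Nat.cofinite_eq_atTop, Metric.tendsto_atTop]
    intro ε hε
    obtain ⟨i, hi⟩ := (huv ε hε).exists
    obtain ⟨N, hN⟩ := Metric.tendsto_atTop.mp (hu i).tendsto_atTop_zero ε hε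
    refine ⟨N, fun n hn => ?_⟩
    have h₁ := hi n
    have h₂ := hN n hn
    rw [dist_eq_norm] at h₁
    rw [dist_zero_right] at h₂ ⊢
    rw [← sub_add_cancel (v n) (u i n)]
    exact (IsUltrametricDist.norm_add_le_max _ _).trans_lt (max_lt h₁ h₂)
  refine ⟨hv, Metric.tendsto_atTop.mpr fun ε hε => ?_⟩
  obtain ⟨N, hN⟩ := eventually_atTop.mp (huv (ε / 2) (half_pos hε))
  refine ⟨N, fun i hi => ?_⟩
  rw [dist_eq_norm, ← (hu i).tsum_sub hv]
  refine (IsUltrametricDist.norm_tsum_le_of_forall_le_of_nonneg (half_pos hε).le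
    fun n => ?_).trans_lt (half_lt_self hε)
  rw [← dist_eq_norm, dist_comm]
  exact (hN i hi n).le

section Holomorphic

variable {K : Type*} [NormedField K] [IsUltrametricDist K] [CompleteSpace K] {a b : K}
  {f : ℕ → K → K} {c : ℕ → ℕ → K} {c' : ℕ → K}

theorem exists_tendstoUniformly_coeff_mul_pow [IsAlgClosed K] (hK : ∃ x : K, 1 < ‖x‖)
    (hR : 0 < ‖a - b‖) (hf : ∀ i, HolomorphicOn' K (c i) b (f i) (arc K a b))
    (hcauchy : UniformCauchySeqOn f atTop (arc K a b)) :
    ∃ c' : ℕ → K, TendstoUniformly (fun i n => c i n * (a - b) ^ n)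
      (fun n => c' n * (a - b) ^ n) atTop := by
  have hc : UniformCauchySeqOn (fun i n => c i n * (a - b) ^ n) atTop Set.univ := by
    rw [Metric.uniformCauchySeqOn_iff] at hcauchy ⊢
    intro ε hε
    obtain ⟨M, hM⟩ := hcauchy (ε / 2) (half_pos hε)
    refine ⟨M, fun i hi j hj n _ => ?_⟩
    rw [dist_eq_norm, ← sub_mul]
    refine (((hf i).sub (hf j)).norm_coeff_mul_pow_le hK hR (fun x hx => ?_) n).trans_lt
      (half_lt_self hε)
    rw [Pi.sub_apply, ← dist_eq_norm]
    exact (hM i hi j hj x hx).le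
  choose e he using fun n => cauchySeq_tendsto_of_complete (hc.cauchySeq (Set.mem_univ n))
  have hab : a - b ≠ 0 := norm_pos_iff.mp hR
  refine ⟨fun n => e n / (a - b) ^ n, ?_⟩
  simp_rw [div_mul_cancel₀ _ (pow_ne_zero _ hab)]
  exact tendstoUniformlyOn_univ.mp (hc.tendstoUniformlyOn_of_tendsto fun n _ => he n)

theorem HolomorphicOn'.of_tendstoUniformlyOn {g : K → K}
    (hf : ∀ i, HolomorphicOn' K (c i) b (f i) (arc K a b))
    (hfg : TendstoUniformlyOn f g atTop (arc K a b))
    (hc : TendstoUniformly (fun i n => c i n * (a - b) ^ n) (fun n => c' n * (a - b) ^ n) atTop) :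
    HolomorphicOn' K c' b g (arc K a b) := by
  intro x hx
  have hcx : TendstoUniformly (fun i n => c i n * (x - b) ^ n) (fun n => c' n * (x - b) ^ n)
      atTop := by
    rw [Metric.tendstoUniformly_iff] at hc ⊢
    refine fun ε hε => (hc ε hε).mono fun i hi n => lt_of_le_of_lt ?_ (hi n)
    simp only [dist_eq_norm, ← sub_mul, norm_mul, norm_pow]
    gcongr
    exact hx.le
  obtain ⟨hs, hlim⟩ := summable_and_tendsto_tsum_of_tendstoUniformly (fun i => (hf i x hx).1) hcx
  exact ⟨hs, tendsto_nhds_unique (hfg.tendsto_at hx)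
    (hlim.congr fun i => ((hf i x hx).2).symm)⟩

end Holomorphic

theorem SubseqFrom.exists_lt_eq {ψ φ : PathSeq} {k₀ : ℕ} (h : SubseqFrom ψ φ k₀) {M k : ℕ}
    (hk : k₀ + M < k) : ∃ j, M < j ∧ ψ.toFun k = φ.toFun j := by
  obtain ⟨σ, hσ, hψ⟩ := h
  have hmono : StrictMono fun d => σ (k₀ + d) :=
    strictMono_nat_of_lt_succ fun d => hσ _ _ (by omega) (by omega)
  have hle := hmono.id_le (k - k₀)
  simp only [id, Nat.add_sub_cancel' (by omega : k₀ ≤ k)] at hle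
  exact ⟨σ k, by omega, (hψ k (by omega)).2⟩

section Integral

variable {p : ℕ} {K : Type*} [NormedField K] {a b : K} {Φ : Set PathSeq}

theorem HasIntegral.norm_sub_le (hΦ : Interlocked Φ) {f g : K → K} {L₁ L₂ : K} {δ : ℝ}
    (hf : HasIntegral p K a b f Φ L₁) (hg : HasIntegral p K a b g Φ L₂)
    (hfg : ∀ N, ‖Asum p K a b f N - Asum p K a b g N‖ ≤ δ) : ‖L₁ - L₂‖ ≤ δ := by
  refine le_of_forall_pos_le_add fun η hη => ?_
  obtain ⟨φ₁, hφ₁, M₁, -, h₁⟩ := hf (η / 2) (half_pos hη)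
  obtain ⟨φ₂, hφ₂, M₂, -, h₂⟩ := hg (η / 2) (half_pos hη)
  obtain ⟨ψ, -, k₀, -, hψ₁, hψ₂⟩ := hΦ.2 φ₁ hφ₁ φ₂ hφ₂
  obtain ⟨j₁, hj₁, e₁⟩ := hψ₁.exists_lt_eq (M := M₁) (k := k₀ + M₁ + M₂ + 1) (by omega)
  obtain ⟨j₂, hj₂, e₂⟩ := hψ₂.exists_lt_eq (M := M₂) (k := k₀ + M₁ + M₂ + 1) (by omega)
  set N := ψ.toFun (k₀ + M₁ + M₂ + 1)
  have h₁N : ‖Asum p K a b f N - L₁‖ < η / 2 := e₁ ▸ h₁ j₁ hj₁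
  have h₂N : ‖Asum p K a b g N - L₂‖ < η / 2 := e₂ ▸ h₂ j₂ hj₂
  calc ‖L₁ - L₂‖ = ‖(L₁ - Asum p K a b f N) + (Asum p K a b f N - Asum p K a b g N)
        + (Asum p K a b g N - L₂)‖ := by congr 1; abel
    _ ≤ _ := norm_add₃_le
    _ ≤ δ + η := by rw [norm_sub_rev L₁]; linarith [hfg N]

theorem HasIntegral.of_tendstoUniformly [CompleteSpace K] (hΦ : Interlocked Φ) {F : ℕ → K → K}
    {G : K → K} {I : ℕ → K} (hI : ∀ i, HasIntegral p K a b (F i) Φ (I i))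
    (hF : TendstoUniformly (fun i => Asum p K a b (F i)) (Asum p K a b G) atTop) :
    ∃ L, Tendsto I atTop (𝓝 L) ∧ HasIntegral p K a b G Φ L := by
  have hcauchy : CauchySeq I := by
    rw [Metric.cauchySeq_iff]
    intro ε hε
    obtain ⟨M, hM⟩ := Metric.uniformCauchySeqOn_iff.mp
      (hF.tendstoUniformlyOn (s := Set.univ)).uniformCauchySeqOn (ε / 2) (half_pos hε)
    refine ⟨M, fun i hi j hj => ?_⟩
    rw [dist_eq_norm]
    refine ((hI i).norm_sub_le hΦ (hI j) fun N => ?_).trans_lt (half_lt_self hε)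
    rw [← dist_eq_norm]
    exact (hM i hi j hj N trivial).le
  obtain ⟨L, hL⟩ := cauchySeq_tendsto_of_complete hcauchy
  refine ⟨L, hL, fun ε hε => ?_⟩
  have hε3 : 0 < ε / 3 := by positivity
  obtain ⟨i, hiF, hiL⟩ := ((Metric.tendstoUniformly_iff.mp hF _ hε3).and
    (hL.eventually (Metric.ball_mem_nhds L hε3))).exists
  obtain ⟨φ, hφ, M, hM, h⟩ := hI i _ hε3
  refine ⟨φ, hφ, M, hM, fun k hk => ?_⟩
  set N := φ.toFun k
  have hG : ‖Asum p K a b G N - Asum p K a b (F i) N‖ < ε / 3 := by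
    rw [← dist_eq_norm]; exact hiF N
  have hIL : ‖I i - L‖ < ε / 3 := by rw [← dist_eq_norm]; exact hiL
  calc ‖Asum p K a b G N - L‖ = ‖(Asum p K a b G N - Asum p K a b (F i) N)
        + (Asum p K a b (F i) N - I i) + (I i - L)‖ := by congr 1; abel
    _ ≤ _ := norm_add₃_le
    _ < ε := by linarith [h k hk]

end Integral

theorem tendstoUniformly_Asum {p : ℕ} {K : Type*} [NormedField K] [IsUltrametricDist K]
    [IsAlgClosed K] [CharZero K] (hp : p.Prime) (hpK : ‖(p : K)‖ < 1) {a b : K}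
    (hR : 0 < ‖a - b‖) {f : ℕ → K → K} {c : ℕ → ℕ → K} {g : K → K} {c' : ℕ → K}
    (hf : ∀ i, HolomorphicOn' K (c i) b (f i) (arc K a b))
    (hg : HolomorphicOn' K c' b g (arc K a b))
    (hc : TendstoUniformly (fun i n => c i n * (a - b) ^ n) (fun n => c' n * (a - b) ^ n) atTop) :
    TendstoUniformly (fun i => Asum p K a b (f i)) (Asum p K a b g) atTop := by
  rw [Metric.tendstoUniformly_iff] at hc ⊢
  intro ε hε
  have hδ : 0 < ε / (2 * ‖a - b‖) := by positivity
  filter_upwards [hc _ hδ] with i hi N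
  rw [dist_eq_norm, Asum_sub]
  calc ‖Asum p K a b (g - f i) N‖ ≤ ‖a - b‖ * (ε / (2 * ‖a - b‖)) :=
        (hg.sub (hf i)).norm_Asum_le hp hpK hR (fun n => by
          rw [Pi.sub_apply, sub_mul, ← dist_eq_norm]; exact (hi n).le) N
    _ = ε / 2 := by field_simp
    _ < ε := half_lt_self hε

theorem stmt_2_general (p : ℕ) [Fact (Nat.Prime p)]
    (K : Type*) [NormedField K] [CompleteSpace K] [IsAlgClosed K] [IsUltrametricDist K]
    [Algebra ℚ_[p] K] (hKext : ∀ q : ℚ_[p], ‖algebraMap ℚ_[p] K q‖ = ‖q‖)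
    (a b : K) (hR : 0 < ‖a - b‖) (Φ : Set PathSeq) (hΦ : Interlocked Φ)
    (f : ℕ → K → K) (c : ℕ → ℕ → K)
    (hf : ∀ i : ℕ, HolomorphicOn' K (c i) b (f i) (arc K a b))
    (I : ℕ → K) (hI : ∀ i : ℕ, HasIntegral p K a b (f i) Φ (I i))
    (g : K → K) (hconv : TendstoUniformlyOn f g Filter.atTop (arc K a b)) :
    (∃ c' : ℕ → K, HolomorphicOn' K c' b g (arc K a b)) ∧
    ∃ L : K, Filter.Tendsto I Filter.atTop (nhds L) ∧ HasIntegral p K a b g Φ L := by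
  have hp : p.Prime := Fact.out
  have : CharZero K := charZero_of_injective_algebraMap (algebraMap ℚ_[p] K).injective
  have hpK : ‖(p : K)‖ = (p : ℝ)⁻¹ := by
    rw [← map_natCast (algebraMap ℚ_[p] K), hKext, Padic.norm_p]
  have hp1 : (1 : ℝ) < p := by exact_mod_cast hp.one_lt
  have hK : ∃ x : K, 1 < ‖x‖ := ⟨(p : K)⁻¹, by rwa [norm_inv, hpK, inv_inv]⟩
  obtain ⟨c', hc'⟩ := exists_tendstoUniformly_coeff_mul_pow hK hR hf hconv.uniformCauchySeqOn
  have hg := HolomorphicOn'.of_tendstoUniformlyOn hf hconv hc'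
  exact ⟨⟨c', hg⟩, HasIntegral.of_tendstoUniformly hΦ hI
    (tendstoUniformly_Asum hp (hpK ▸ inv_lt_one_of_one_lt₀ hp1) hR hf hg hc')⟩

/-- If the `f i` are holomorphic on `𝒜(a,b)`, each has a line integral
`I i` with respect to the interlocked family `Φ`, and `f i → g` uniformly on `𝒜(a,b)`,
then `g` is holomorphic on `𝒜(a,b)`, its integral exists, and it equals `lim I i`. -/
theorem stmt_2 (p : ℕ) [Fact (Nat.Prime p)] (hp2 : p ≠ 2)
    (K : Type*) [NormedField K] [CompleteSpace K] [IsAlgClosed K] [IsUltrametricDist K]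
    [Algebra ℚ_[p] K] (hKext : ∀ q : ℚ_[p], ‖algebraMap ℚ_[p] K q‖ = ‖q‖)
    (a b : K) (hR : 0 < ‖a - b‖) (Φ : Set PathSeq) (hΦ : Interlocked Φ)
    (f : ℕ → K → K) (c : ℕ → ℕ → K)
    (hf : ∀ i : ℕ, HolomorphicOn' K (c i) b (f i) (arc K a b))
    (I : ℕ → K) (hI : ∀ i : ℕ, HasIntegral p K a b (f i) Φ (I i))
    (g : K → K) (hconv : TendstoUniformlyOn f g Filter.atTop (arc K a b)) :
    (∃ c' : ℕ → K, HolomorphicOn' K c' b g (arc K a b)) ∧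
    ∃ L : K, Filter.Tendsto I Filter.atTop (nhds L) ∧ HasIntegral p K a b g Φ L :=
  stmt_2_general p K hKext a b hR Φ hΦ f c hf I hI g hconv
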